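/- Let T be an ω₁-Aronszajn tree, and let A be the poset of all finite partial functions f : T ⇀ ω such that whenever x, y ∈ dom f are distinct and comparable (x ≤ y or y ≤ x), f(x) ≠ f(y), ordered by reverse inclusion (f ≤ g iff g ⊆ f). Then A satisfies the countable chain condition: every set of pairwise incompatible elements of A is countable. -/

import Mathlib

noncomputable section

universe u

/-- A tree order: a partial order with a least element (the root) in which the set of
strict predecessors of every element is well-ordered by `<`. -/
def IsTreeOrder (T : Type*) [PartialOrder T] : Prop :=
  (∃ r : T, ∀ x : T, r ≤ x) ∧
    ∀ x : T, IsWellOrder {y : T // y < x} (fun a b => (a : T) < (b : T))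

open Classical in
/-- The level of `x`: the order type of its set of strict predecessors. -/
def levelOf {T : Type*} [PartialOrder T] (x : T) : Ordinal :=
  if h : IsWellOrder {y : T // y < x} (fun a b => (a : T) < (b : T)) then
    @Ordinal.type _ _ h
  else 0

/-- The first uncountable ordinal. -/
def omega1 : Ordinal := (Cardinal.aleph 1).ord

/-- `T` has height `ω₁`: `ω₁` is the least ordinal which is the level of no element. -/
def HasHeightOmega1 (T : Type u) [PartialOrder T] : Prop :=
  (∀ α < omega1.{u}, ∃ x : T, levelOf x = α) ∧ ¬∃ x : T, levelOf x = omega1.{u}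

/-- An `ω₁`-Aronszajn tree: a tree order of height `ω₁` with countable levels and no
uncountable chain. -/
def IsAronszajnTree (T : Type u) [PartialOrder T] : Prop :=
  IsTreeOrder T ∧ HasHeightOmega1 T ∧
    (∀ α : Ordinal.{u}, {x : T | levelOf x = α}.Countable) ∧
    (∀ C : Set T, (∀ a ∈ C, ∀ b ∈ C, a ≤ b ∨ b ≤ a) → C.Countable)

/-- A condition of Baumgartner's specialization poset: a finite partial function from
`T` to `ω` (given by a finite domain and its values there) which is injective on
comparable pairs of its domain. -/
structure SpecCond (T : Type u) [PartialOrder T] where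
  dom : Finset T
  val : T → ℕ
  spec : ∀ x ∈ dom, ∀ y ∈ dom, x ≠ y → (x ≤ y ∨ y ≤ x) → val x ≠ val y

/-- The order of the specialization poset: reverse inclusion of partial functions. -/
def SpecLE {T : Type u} [PartialOrder T] (p q : SpecCond T) : Prop :=
  q.dom ⊆ p.dom ∧ ∀ x ∈ q.dom, p.val x = q.val x

/-- Two conditions are incompatible if no condition lies below both. -/
def SpecIncompat {T : Type u} [PartialOrder T] (p q : SpecCond T) : Prop :=
  ¬ ∃ r : SpecCond T, SpecLE r p ∧ SpecLE r q

section Aux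

open Set

variable {T : Type u} [PartialOrder T]

theorem levelOf_eq (h : IsTreeOrder T) (x : T) :
    levelOf x = @Ordinal.type _ _ (h.2 x) := dif_pos (h.2 x)

/-- any two elements below a common element are comparable -/
theorem comp_of_le (h : IsTreeOrder T) {a b c : T} (hac : a ≤ c) (hbc : b ≤ c) :
    a ≤ b ∨ b ≤ a := by
  rcases eq_or_lt_of_le hac with rfl | hac'
  · exact Or.inr hbc
  rcases eq_or_lt_of_le hbc with rfl | hbc'
  · exact Or.inl hac
  haveI := h.2 c
  rcases @trichotomous _ (fun a b : {y : T // y < c} => (a : T) < (b : T)) _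
      ⟨a, hac'⟩ ⟨b, hbc'⟩ with h1 | h1 | h1
  · exact Or.inl h1.le
  · exact Or.inl (le_of_eq (congrArg Subtype.val h1))
  · exact Or.inr h1.le

theorem levelOf_coe (h : IsTreeOrder T) {b : T} (z : {y : T // y < b}) :
    levelOf (z : T) =
      @Ordinal.typein _ (fun p q : {y : T // y < b} => (p : T) < (q : T)) (h.2 b) z := by
  haveI := h.2 b
  haveI := h.2 (z : T)
  rw [levelOf_eq h, ← Ordinal.type_subrel]
  apply Ordinal.type_eq.2
  constructor
  exact RelIso.mk
    (Equiv.mk (fun w => ⟨⟨(w : T), lt_trans w.2 z.2⟩, w.2⟩)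
      (fun w => ⟨(w.1 : T), w.2⟩)
      (fun w => rfl) (fun w => rfl))
    (Iff.rfl)

theorem levelOf_strictMono (h : IsTreeOrder T) {a b : T} (hab : a < b) :
    levelOf a < levelOf b := by
  haveI := h.2 b
  have := levelOf_coe h ⟨a, hab⟩
  rw [levelOf_eq h b]
  exact this ▸ Ordinal.typein_lt_type _ _

theorem exists_le_levelOf_eq (h : IsTreeOrder T) {b : T} {l : Ordinal}
    (hl : l ≤ levelOf b) : ∃ a, a ≤ b ∧ levelOf a = l := by
  rcases eq_or_lt_of_le hl with rfl | hl'
  · exact ⟨b, le_rfl, rfl⟩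
  haveI := h.2 b
  rw [levelOf_eq h b] at hl'
  refine ⟨(Ordinal.enum (fun p q : {y : T // y < b} => (p : T) < (q : T)) ⟨l, hl'⟩ : {y : T // y < b}),
    (Ordinal.enum _ ⟨l, hl'⟩ : {y : T // y < b}).2.le, ?_⟩
  rw [levelOf_coe h]
  exact Ordinal.typein_enum _ _

theorem le_of_comp_levelOf_le (h : IsTreeOrder T) {a b : T}
    (hc : a ≤ b ∨ b ≤ a) (hl : levelOf a ≤ levelOf b) : a ≤ b := by
  rcases hc with hc | hc
  · exact hc
  rcases eq_or_lt_of_le hc with rfl | hc'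
  · exact le_rfl
  · exact absurd (levelOf_strictMono h hc') (not_lt.2 hl)

theorem levelOf_root (h : IsTreeOrder T) {r : T} (hr : ∀ x, r ≤ x) : levelOf r = 0 := by
  haveI := h.2 r
  haveI : IsEmpty {y : T // y < r} :=
    ⟨fun y => absurd (le_antisymm y.2.le (hr y.1)) (ne_of_lt y.2)⟩
  rw [levelOf_eq h r]
  exact Ordinal.type_eq_zero_of_empty _



theorem countable_of_injOn {α : Type u} {β : Type v} {f : α → β} {s : Set α}
    (hf : Set.InjOn f s) (hc : (f '' s).Countable) : s.Countable := by
  haveI := hc.to_subtype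
  have hinj : Function.Injective (fun a : s => (⟨f a, Set.mem_image_of_mem f a.2⟩ : f '' s)) := by
    intro a b hab
    exact Subtype.ext (hf a.2 b.2 (congrArg Subtype.val hab))
  exact Set.countable_coe_iff.mp hinj.countable

theorem uncountable_range {α : Type u} {β : Type v} {f : α → β}
    (hf : Function.Injective f) (hα : ¬(Set.univ : Set α).Countable) :
    ¬(Set.range f).Countable := by
  intro h
  rw [← Set.image_univ] at h
  exact hα (countable_of_injOn (hf.injOn) h)

theorem exists_uncountable_fiber {α : Type u} {β : Type v} {S : Set α}
    (hS : ¬S.Countable) (f : α → β) {C : Set β} (hC : C.Countable)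
    (hf : ∀ a ∈ S, f a ∈ C) : ∃ b ∈ C, ¬{a | a ∈ S ∧ f a = b}.Countable := by
  by_contra h
  push_neg at h
  apply hS
  have : S ⊆ ⋃ b ∈ C, {a | a ∈ S ∧ f a = b} := fun a ha =>
    Set.mem_biUnion (hf a ha) ⟨ha, rfl⟩
  exact (hC.biUnion fun b hb => h b hb).mono this

theorem uncountable_nonempty {α : Type u} {S : Set α} (hS : ¬S.Countable) : S.Nonempty := by
  rcases S.eq_empty_or_nonempty with rfl | h
  · exact absurd Set.countable_empty hS
  · exact h

theorem uncountable_diff {α : Type u} {S C : Set α} (hS : ¬S.Countable) (hC : C.Countable) :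
    ¬(S \ C).Countable := fun h =>
  hS ((h.union hC).mono (by intro x hx; by_cases hxc : x ∈ C <;> simp [hx, hxc]))

open Cardinal in
/-- split an uncountable set into two disjoint uncountable subsets -/
theorem exists_uncountable_split {α : Type u} {S : Set α} (hS : ¬S.Countable) :
    ∃ S₁ S₂ : Set α, S₁ ⊆ S ∧ S₂ ⊆ S ∧ Disjoint S₁ S₂ ∧ ¬S₁.Countable ∧ ¬S₂.Countable := by
  have huniv : ¬(Set.univ : Set S).Countable := by
    intro h
    exact hS (Set.countable_coe_iff.mp (Set.countable_univ_iff.mp h))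
  have h1 : (ℵ₀ : Cardinal) ≤ #S := by
    by_contra h
    exact hS (Set.countable_coe_iff.mp (Cardinal.mk_le_aleph0_iff.mp (le_of_not_ge h)))
  have h2 : #(S ⊕ S : Type u) = #S := by
    rw [← Cardinal.add_def]; exact Cardinal.add_eq_self h1
  obtain ⟨e⟩ := Cardinal.eq.mp h2
  have hil : Function.Injective (fun a : S => ((e (Sum.inl a) : S) : α)) :=
    Subtype.val_injective.comp (e.injective.comp Sum.inl_injective)
  have hir : Function.Injective (fun a : S => ((e (Sum.inr a) : S) : α)) :=
    Subtype.val_injective.comp (e.injective.comp Sum.inr_injective)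
  refine ⟨Set.range fun a : S => ((e (Sum.inl a) : S) : α),
          Set.range fun a : S => ((e (Sum.inr a) : S) : α), ?_, ?_, ?_,
          uncountable_range hil huniv, uncountable_range hir huniv⟩
  · rintro x ⟨a, rfl⟩; exact (e (Sum.inl a)).2
  · rintro x ⟨a, rfl⟩; exact (e (Sum.inr a)).2
  · rw [Set.disjoint_left]
    rintro x ⟨a, rfl⟩ ⟨b, hb⟩
    have : e (Sum.inr b) = e (Sum.inl a) := Subtype.ext hb
    exact Sum.inl_ne_inr (e.injective this).symm

theorem exists_ne_of_uncountable {α : Type u} {S : Set α} (hS : ¬S.Countable) (a : α) :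
    ∃ b ∈ S, b ≠ a := by
  obtain ⟨b, hb⟩ := uncountable_nonempty (uncountable_diff hS (Set.countable_singleton a))
  exact ⟨b, hb.1, by simpa using hb.2⟩

open Cardinal in
theorem levelOf_lt_omega1 (htr : IsTreeOrder T)
    (hch : ∀ C : Set T, (∀ a ∈ C, ∀ b ∈ C, a ≤ b ∨ b ≤ a) → C.Countable) (x : T) :
    levelOf x < omega1.{u} := by
  rw [levelOf_eq htr x, omega1, Cardinal.lt_ord, Ordinal.card_type]
  have hcount : ({y : T | y < x}).Countable :=
    hch _ (fun a ha b hb => comp_of_le htr ha.le hb.le)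
  exact (Cardinal.countable_iff_lt_aleph_one _).mp hcount

open Cardinal in
theorem countable_Iio_ordinal {o : Ordinal.{u}} (ho : o < omega1.{u}) :
    (Set.Iio o).Countable := by
  rw [Cardinal.countable_iff_lt_aleph_one, Ordinal.mk_Iio_ordinal]
  have h1 : o.card < Cardinal.aleph 1 := Cardinal.lt_ord.mp ho
  have h2 : o.card ≤ ℵ₀ := by
    rwa [← Cardinal.succ_aleph0, Order.lt_succ_iff] at h1
  calc Cardinal.lift.{u+1} o.card ≤ Cardinal.lift.{u+1} ℵ₀ := Cardinal.lift_le.mpr h2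
    _ = ℵ₀ := Cardinal.lift_aleph0
    _ < ℵ₁ := Cardinal.aleph0_lt_aleph_one

theorem countable_levels_lt (hlev : ∀ α : Ordinal.{u}, {x : T | levelOf x = α}.Countable)
    {δ : Ordinal.{u}} (hδ : δ < omega1.{u}) : {x : T | levelOf x < δ}.Countable := by
  have heq : {x : T | levelOf x < δ} = ⋃ β ∈ Set.Iio δ, {x : T | levelOf x = β} := by
    ext x
    simp only [Set.mem_setOf_eq, Set.mem_iUnion, Set.mem_Iio, exists_prop]
    exact ⟨fun h => ⟨levelOf x, h, rfl⟩, fun ⟨β, hβ, hx⟩ => hx ▸ hβ⟩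
  rw [heq]
  exact (countable_Iio_ordinal hδ).biUnion fun β _ => hlev β

open Cardinal in
theorem uncountable_of_levels {A : Set T} {c : Ordinal.{u}} (hc : c < omega1.{u})
    (hall : ∀ l : Ordinal.{u}, c ≤ l → l < omega1.{u} → ∃ a ∈ A, levelOf a = l) :
    ¬A.Countable := by
  intro hA
  have h1 : Set.Iio omega1.{u} ⊆ Set.Iio c ∪ (levelOf '' A) := by
    intro l hl
    rcases le_or_gt c l with h | h
    · obtain ⟨a, ha, hla⟩ := hall l h hl
      exact Or.inr ⟨a, ha, hla⟩
    · exact Or.inl h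
  have h2 : (Set.Iio omega1.{u}).Countable :=
    (((countable_Iio_ordinal hc).union (hA.image _))).mono h1
  rw [Cardinal.countable_iff_lt_aleph_one, Ordinal.mk_Iio_ordinal] at h2
  rw [omega1, Cardinal.card_ord] at h2
  simp at h2

/-- The climbing lemma: if uncountably many `g i` lie above `x`, then for every
level `l` (above the level of `x`) there is a node `w` at level `l`, above `x`,
with uncountably many `g i` above `w`. -/
theorem climb (htr : IsTreeOrder T)
    (hlev : ∀ α : Ordinal.{u}, {x : T | levelOf x = α}.Countable)
    {ι : Type v} (g : ι → T) (I : Set ι) (hg : Set.InjOn g I) {x : T}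
    (hx : ¬{i | i ∈ I ∧ x ≤ g i}.Countable) {l : Ordinal.{u}}
    (hl1 : levelOf x ≤ l) (hl2 : l < omega1.{u}) :
    ∃ w, x ≤ w ∧ levelOf w = l ∧ ¬{i | i ∈ I ∧ w ≤ g i}.Countable := by
  classical
  have hsmall : {i | i ∈ I ∧ levelOf (g i) < l}.Countable := by
    apply countable_of_injOn (hg.mono (fun i hi => hi.1))
    apply (countable_levels_lt hlev hl2).mono
    rintro y ⟨i, hi, rfl⟩
    exact hi.2
  set S := {i | i ∈ I ∧ (x ≤ g i ∧ l ≤ levelOf (g i))} with hSdef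
  have hS : ¬S.Countable := by
    intro h
    apply hx
    apply (h.union hsmall).mono
    rintro i ⟨hiI, hix⟩
    rcases le_or_gt l (levelOf (g i)) with hc | hc
    · exact Or.inl ⟨hiI, hix, hc⟩
    · exact Or.inr ⟨hiI, hc⟩
  set f : ι → T := fun i =>
    if h : l ≤ levelOf (g i) then Classical.choose (exists_le_levelOf_eq htr h) else x
    with hfdef
  have hf : ∀ i ∈ S, f i ≤ g i ∧ levelOf (f i) = l := by
    intro i hi
    have h := hi.2.2
    simp only [hfdef, dif_pos h]
    exact Classical.choose_spec (exists_le_levelOf_eq htr h)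
  obtain ⟨w, hwC, hwunc⟩ := exists_uncountable_fiber hS f (hlev l)
    (fun i hi => (hf i hi).2)
  have hxw : x ≤ w := by
    obtain ⟨i, hi⟩ := uncountable_nonempty hwunc
    have h1 := hf i hi.1
    have : x ≤ f i := by
      apply le_of_comp_levelOf_le htr (comp_of_le htr hi.1.2.1 h1.1)
      rw [h1.2]; exact hl1
    rwa [hi.2] at this
  refine ⟨w, hxw, hwC, ?_⟩
  intro h
  apply hwunc
  apply h.mono
  rintro i ⟨hiS, hfi⟩
  exact ⟨hiS.1, hfi ▸ (hf i hiS).1⟩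

/-- The bipartite branch lemma: two uncountable families of tuples in an Aronszajn tree
cannot have every cross pair linked through one of finitely many coordinate pairs. -/
theorem branches (htr : IsTreeOrder T)
    (hlev : ∀ α : Ordinal.{u}, {x : T | levelOf x = α}.Countable)
    (hch : ∀ C : Set T, (∀ a ∈ C, ∀ b ∈ C, a ≤ b ∨ b ≤ a) → C.Countable)
    {ι : Type v} (n : ℕ) (S : Finset (Fin n × Fin n)) :
    ∀ (y : ι → Fin n → T) (I' I'' : Set ι),
    ¬I'.Countable → ¬I''.Countable →
    (∀ k, Set.InjOn (fun i => y i k) I') → (∀ k, Set.InjOn (fun i => y i k) I'') →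
    (∀ i ∈ I', ∀ j ∈ I'', ∃ p ∈ S, (y i p.1 ≤ y j p.2 ∨ y j p.2 ≤ y i p.1)) → False := by
  classical
  induction S using Finset.induction_on with
  | empty =>
    intro y I' I'' h1 h2 _ _ hlink
    obtain ⟨i, hi⟩ := uncountable_nonempty h1
    obtain ⟨j, hj⟩ := uncountable_nonempty h2
    obtain ⟨p, hp, -⟩ := hlink i hi j hj
    exact absurd hp (Finset.notMem_empty p)
  | @insert a S ha IH =>
    intro y I' I'' h1 h2 hinj' hinj'' hlink
    obtain ⟨r, hr⟩ := htr.1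
    have hrlev : levelOf r = 0 := levelOf_root htr hr
    set A' : Set T := {x | ¬{i | i ∈ I' ∧ x ≤ y i a.1}.Countable} with hA'def
    set A'' : Set T := {x | ¬{j | j ∈ I'' ∧ x ≤ y j a.2}.Countable} with hA''def
    have hrA' : r ∈ A' := by
      simp only [hA'def, Set.mem_setOf_eq]
      intro h
      exact h1 (h.mono (fun i hi => by simp [Set.mem_setOf_eq, hi, hr]) |>.mono
        (fun i hi => hi)) |>.elim
    have hrA'' : r ∈ A'' := by
      simp only [hA''def, Set.mem_setOf_eq]
      intro h
      exact h2 (h.mono (fun j hj => by simp [Set.mem_setOf_eq, hj, hr]))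
    by_cases hcase : ∃ x₁ ∈ A', ∃ x₂ ∈ A'', ¬(x₁ ≤ x₂ ∨ x₂ ≤ x₁)
    · -- we can split the families along incomparable nodes; coordinate pair a is no
      -- longer usable for cross links
      obtain ⟨x₁, hx₁, x₂, hx₂, hic⟩ := hcase
      apply IH y {i | i ∈ I' ∧ x₁ ≤ y i a.1} {j | j ∈ I'' ∧ x₂ ≤ y j a.2} hx₁ hx₂
        (fun k => (hinj' k).mono (fun i hi => hi.1))
        (fun k => (hinj'' k).mono (fun j hj => hj.1))
      intro i hi j hj
      obtain ⟨p, hp, hcomp⟩ := hlink i hi.1 j hj.1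
      refine ⟨p, ?_, hcomp⟩
      rcases Finset.mem_insert.mp hp with rfl | hp'
      · exfalso
        apply hic
        rcases hcomp with hc | hc
        · exact comp_of_le htr (hi.2.trans hc) hj.2
        · exact comp_of_le htr hi.2 (hj.2.trans hc)
      · exact hp'
    · -- otherwise every node of A' is comparable with every node of A'', which
      -- makes A' an uncountable chain
      push_neg at hcase
      have hA'unc : ¬A'.Countable := by
        apply uncountable_of_levels (c := 0)
          (lt_of_le_of_lt (zero_le : (0:Ordinal) ≤ _) (levelOf_lt_omega1 htr hch r))
        intro l _ hl
        have hx : ¬{i | i ∈ I' ∧ r ≤ y i a.1}.Countable := hrA'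
        obtain ⟨w, -, hwl, hwunc⟩ := climb htr hlev (fun i => y i a.1) I' (hinj' a.1)
          hx (hrlev ▸ (zero_le : (0:Ordinal) ≤ l)) hl
        exact ⟨w, hwunc, hwl⟩
      apply hA'unc
      apply hch
      intro a₁ ha₁ a₂ ha₂
      set l := max (levelOf a₁) (levelOf a₂) with hldef
      have hlo : l < omega1.{u} :=
        max_lt (levelOf_lt_omega1 htr hch a₁) (levelOf_lt_omega1 htr hch a₂)
      obtain ⟨b, -, hbl, hbunc⟩ := climb htr hlev (fun j => y j a.2) I'' (hinj'' a.2)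
        hrA'' (hrlev ▸ (zero_le : (0:Ordinal) ≤ l)) hlo
      have hb : b ∈ A'' := hbunc
      have h₁ : a₁ ≤ b :=
        le_of_comp_levelOf_le htr (hcase a₁ ha₁ b hb) (hbl ▸ le_max_left _ _)
      have h₂ : a₂ ≤ b :=
        le_of_comp_levelOf_le htr (hcase a₂ ha₂ b hb) (hbl ▸ le_max_right _ _)
      exact comp_of_le htr h₁ h₂

/-- Key lemma: an Aronszajn tree admits no uncountable family of pairwise disjoint
nonempty finite sets any two of which contain comparable elements. -/
theorem key_lemma (htr : IsTreeOrder T)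
    (hlev : ∀ α : Ordinal.{u}, {x : T | levelOf x = α}.Countable)
    (hch : ∀ C : Set T, (∀ a ∈ C, ∀ b ∈ C, a ≤ b ∨ b ≤ a) → C.Countable)
    {ι : Type v} (F : ι → Finset T) (I : Set ι) (hI : ¬I.Countable)
    (hdisj : ∀ i ∈ I, ∀ j ∈ I, i ≠ j → ∀ x, x ∈ F i → x ∈ F j → False)
    (hlink : ∀ i ∈ I, ∀ j ∈ I, i ≠ j → ∃ u ∈ F i, ∃ v ∈ F j, u ≤ v ∨ v ≤ u) :
    False := by
  classical
  obtain ⟨r, hr⟩ := htr.1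
  -- uniformize the cardinality
  obtain ⟨n, -, hn⟩ := exists_uncountable_fiber hI (fun i => (F i).card)
    (C := Set.univ) Set.countable_univ (fun a _ => Set.mem_univ _)
  set I₁ := {i | i ∈ I ∧ (F i).card = n} with hI₁def
  -- enumerate each finite set
  set y : ι → Fin n → T := fun i k =>
    if h : (F i).card = n then ((F i).equivFin.symm (Fin.cast h.symm k) : T) else r
    with hydef
  have hymem : ∀ i ∈ I₁, ∀ k, y i k ∈ F i := by
    intro i hi k
    simp only [hydef, dif_pos hi.2]
    exact ((F i).equivFin.symm (Fin.cast hi.2.symm k)).2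
  have hysurj : ∀ i ∈ I₁, ∀ u ∈ F i, ∃ k, y i k = u := by
    intro i hi u hu
    refine ⟨Fin.cast hi.2 ((F i).equivFin ⟨u, hu⟩), ?_⟩
    simp only [hydef, dif_pos hi.2]
    have : Fin.cast hi.2.symm (Fin.cast hi.2 ((F i).equivFin ⟨u, hu⟩)) =
        (F i).equivFin ⟨u, hu⟩ := by
      apply Fin.ext; rfl
    rw [this, Equiv.symm_apply_apply]
  -- split into two disjoint uncountable halves
  obtain ⟨I', I'', hsub', hsub'', hdisjI, hunc', hunc''⟩ := exists_uncountable_split hn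
  have hinj : ∀ (J : Set ι), J ⊆ I₁ → ∀ k, Set.InjOn (fun i => y i k) J := by
    intro J hJ k i hi j hj hyij
    by_contra hij
    have hyij' : y i k = y j k := hyij
    exact hdisj i (hJ hi).1 j (hJ hj).1 hij (y i k) (hymem i (hJ hi) k)
      (hyij' ▸ hymem j (hJ hj) k)
  apply branches htr hlev hch n Finset.univ y I' I'' hunc' hunc''
    (hinj I' hsub' ) (hinj I'' hsub'')
  intro i hi j hj
  have hij : i ≠ j := fun h => Set.disjoint_left.mp hdisjI hi (h ▸ hj)
  obtain ⟨u, hu, v, hv, hcomp⟩ :=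
    hlink i (hsub' hi).1 j (hsub'' hj).1 hij
  obtain ⟨k, hk⟩ := hysurj i (hsub' hi) u hu
  obtain ⟨l, hl⟩ := hysurj j (hsub'' hj) v hv
  exact ⟨(k, l), Finset.mem_univ _, by rw [hk, hl]; exact hcomp⟩

/-- Δ-system lemma for uncountable families of finite sets (weak form). -/
theorem delta_system {ι : Type v} {β : Type w} (n : ℕ) :
    ∀ (D : ι → Finset β) (I : Set ι), ¬I.Countable → (∀ i ∈ I, (D i).card ≤ n) →
    ∃ (J : Set ι) (R : Finset β), J ⊆ I ∧ ¬J.Countable ∧ (∀ i ∈ J, R ⊆ D i) ∧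
      (∀ i ∈ J, ∀ j ∈ J, i ≠ j → ∀ x, x ∈ D i → x ∈ D j → x ∈ R) := by
  classical
  induction n with
  | zero =>
    intro D I hI hcard
    refine ⟨I, ∅, le_refl _, hI, fun i _ => Finset.empty_subset _, ?_⟩
    intro i hi j hj hij x hxi hxj
    have : D i = ∅ := Finset.card_eq_zero.mp (Nat.le_zero.mp (hcard i hi))
    rw [this] at hxi
    exact absurd hxi (Finset.notMem_empty x)
  | succ n IH =>
    intro D I hI hcard
    by_cases hx : ∃ x : β, ¬{i | i ∈ I ∧ x ∈ D i}.Countable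
    · -- a common element in uncountably many sets: remove it and recurse
      obtain ⟨x, hxunc⟩ := hx
      set I₁ := {i | i ∈ I ∧ x ∈ D i} with hI₁def
      obtain ⟨J, R', hJsub, hJunc, hRsub, hRmem⟩ := IH (fun i => (D i).erase x) I₁ hxunc
        (fun i hi => by
          rw [Finset.card_erase_of_mem hi.2]
          have := hcard i hi.1; omega)
      refine ⟨J, insert x R', fun i hi => (hJsub hi).1, hJunc, ?_, ?_⟩
      · intro i hi
        exact Finset.insert_subset (hJsub hi).2
          ((hRsub i hi).trans (Finset.erase_subset _ _))
      · intro i hi j hj hij z hzi hzj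
        by_cases hzx : z = x
        · exact hzx ▸ Finset.mem_insert_self x R'
        · exact Finset.mem_insert_of_mem
            (hRmem i hi j hj hij z (Finset.mem_erase.mpr ⟨hzx, hzi⟩)
              (Finset.mem_erase.mpr ⟨hzx, hzj⟩))
    · -- every element is in countably many sets: find an uncountable disjoint subfamily
      push_neg at hx
      set P : Set (Set ι) := {J | J ⊆ I ∧ ∀ i ∈ J, ∀ j ∈ J, i ≠ j →
        ∀ z, z ∈ D i → z ∈ D j → False} with hPdef
      obtain ⟨J, hJmax⟩ := zorn_subset P (by
        intro c hcP hchain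
        refine ⟨⋃₀ c, ⟨?_, ?_⟩, fun s hs => Set.subset_sUnion_of_mem hs⟩
        · intro i hi
          obtain ⟨s, hs, his⟩ := hi
          exact (hcP hs).1 his
        · rintro i ⟨s, hs, his⟩ j ⟨t, ht, hjt⟩ hij z hzi hzj
          rcases eq_or_ne s t with rfl | hst
          · exact (hcP hs).2 i his j hjt hij z hzi hzj
          · rcases hchain.total hs ht with h | h
            · exact (hcP ht).2 i (h his) j hjt hij z hzi hzj
            · exact (hcP hs).2 i his j (h hjt) hij z hzi hzj)
      by_cases hJc : J.Countable
      · exfalso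
        set X : Set β := ⋃ i ∈ J, (D i : Set β) with hXdef
        have hXc : X.Countable := hJc.biUnion fun i _ => (D i).countable_toSet
        have hKc : {i | i ∈ I ∧ ∃ z ∈ X, z ∈ D i}.Countable := by
          have hsub : {i | i ∈ I ∧ ∃ z ∈ X, z ∈ D i} ⊆
              ⋃ z ∈ X, {i | i ∈ I ∧ z ∈ D i} := by
            rintro i ⟨hiI, z, hzX, hzD⟩
            exact Set.mem_biUnion hzX ⟨hiI, hzD⟩
          exact (hXc.biUnion fun z _ => hx z).mono hsub
        obtain ⟨i₀, hi₀⟩ := uncountable_nonempty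
          (uncountable_diff (uncountable_diff hI hKc) hJc)
        have hi₀I : i₀ ∈ I := hi₀.1.1
        have hi₀K : i₀ ∉ {i | i ∈ I ∧ ∃ z ∈ X, z ∈ D i} := hi₀.1.2
        have hi₀J : i₀ ∉ J := hi₀.2
        have hJ'P : insert i₀ J ∈ P := by
          constructor
          · exact Set.insert_subset hi₀I hJmax.1.1
          · intro i hi j hj hij z hzi hzj
            rcases Set.mem_insert_iff.mp hi with rfl | hiJ <;>
              rcases Set.mem_insert_iff.mp hj with rfl | hjJ
            · exact hij rfl
            · exact hi₀K ⟨hi₀I, z, Set.mem_biUnion hjJ hzj, hzi⟩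
            · exact hi₀K ⟨hi₀I, z, Set.mem_biUnion hiJ hzi, hzj⟩
            · exact hJmax.1.2 i hiJ j hjJ hij z hzi hzj
        have := hJmax.2 hJ'P (Set.subset_insert i₀ J)
        exact hi₀J (this (Set.mem_insert i₀ J))
      · exact ⟨J, ∅, hJmax.1.1, hJc, fun i _ => Finset.empty_subset _,
          fun i hi j hj hij z hzi hzj =>
            absurd (hJmax.1.2 i hi j hj hij z hzi hzj) not_false⟩

end Aux

/-- Baumgartner's specialization poset of an `ω₁`-Aronszajn tree satisfies the countable
chain condition: every set of pairwise incompatible conditions is countable. -/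
theorem specialization_poset_ccc {T : Type u} [PartialOrder T]
    (hT : IsAronszajnTree T)
    (A : Set (SpecCond T)) (hA : ∀ p ∈ A, ∀ q ∈ A, p ≠ q → SpecIncompat p q) :
    A.Countable := by
  classical
  by_contra hA'
  obtain ⟨htr, -, hlev, hch⟩ := hT
  -- uniformize domain sizes
  obtain ⟨n, -, hn⟩ := exists_uncountable_fiber hA' (fun p => p.dom.card)
    (C := Set.univ) Set.countable_univ (fun a _ => Set.mem_univ _)
  -- extract a Δ-system of domains
  obtain ⟨J, R, hJsub, hJunc, hRsub, hRmem⟩ := delta_system n (fun p : SpecCond T => p.dom)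
    {p | p ∈ A ∧ p.dom.card = n} hn (fun p hp => hp.2.le)
  -- uniformize the values on the root R
  obtain ⟨v, -, hv⟩ := exists_uncountable_fiber hJunc
    (fun p => (fun x : {z // z ∈ R} => p.val x))
    (C := Set.univ) Set.countable_univ (fun a _ => Set.mem_univ _)
  set J₂ := {p | p ∈ J ∧ (fun x : {z // z ∈ R} => p.val x) = v} with hJ₂def
  have hvagree : ∀ p ∈ J₂, ∀ q ∈ J₂, ∀ x ∈ R, p.val x = q.val x := by
    intro p hp q hq x hx
    have h1 := congrFun hp.2 ⟨x, hx⟩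
    have h2 := congrFun hq.2 ⟨x, hx⟩
    simp only at h1 h2
    rw [h1, h2]
  have hmemA : ∀ p ∈ J₂, p ∈ A := fun p hp => (hJsub hp.1).1
  -- incompatibility yields links between the petals
  have hlink : ∀ p ∈ J₂, ∀ q ∈ J₂, p ≠ q →
      ∃ u ∈ p.dom \ R, ∃ w ∈ q.dom \ R, u ≤ w ∨ w ≤ u := by
    intro p hp q hq hpq
    by_contra hno
    push_neg at hno
    have hRp : R ⊆ p.dom := hRsub p hp.1
    have hRq : R ⊆ q.dom := hRsub q hq.1
    set rval : T → ℕ := fun z => if z ∈ p.dom then p.val z else q.val z with hrval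
    have hval_p : ∀ z ∈ p.dom, rval z = p.val z := fun z hz => if_pos hz
    have hval_q : ∀ z ∈ q.dom, rval z = q.val z := by
      intro z hz
      by_cases hzp : z ∈ p.dom
      · have hzR : z ∈ R := hRmem p hp.1 q hq.1 hpq z hzp hz
        rw [hrval]; simp only [if_pos hzp]
        exact hvagree p hp q hq z hzR
      · exact if_neg hzp
    have hspec : ∀ x ∈ p.dom ∪ q.dom, ∀ y ∈ p.dom ∪ q.dom, x ≠ y →
        (x ≤ y ∨ y ≤ x) → rval x ≠ rval y := by
      intro x hx y hy hxy hcomp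
      by_cases hxp : x ∈ p.dom <;> by_cases hyp : y ∈ p.dom
      · rw [hval_p x hxp, hval_p y hyp]; exact p.spec x hxp y hyp hxy hcomp
      · have hyq : y ∈ q.dom := (Finset.mem_union.mp hy).resolve_left hyp
        by_cases hxq : x ∈ q.dom
        · rw [hval_q x hxq, hval_q y hyq]; exact q.spec x hxq y hyq hxy hcomp
        · exfalso
          have hxR : x ∉ R := fun h => hxq (hRq h)
          have hyR : y ∉ R := fun h => hyp (hRp h)
          have := hno x (Finset.mem_sdiff.mpr ⟨hxp, hxR⟩) y
            (Finset.mem_sdiff.mpr ⟨hyq, hyR⟩)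
          rcases hcomp with h | h
          · exact this.1 h
          · exact this.2 h
      · have hxq : x ∈ q.dom := (Finset.mem_union.mp hx).resolve_left hxp
        by_cases hyq : y ∈ q.dom
        · rw [hval_q x hxq, hval_q y hyq]; exact q.spec x hxq y hyq hxy hcomp
        · exfalso
          have hyR : y ∉ R := fun h => hyq (hRq h)
          have hxR : x ∉ R := fun h => hxp (hRp h)
          have := hno y (Finset.mem_sdiff.mpr ⟨hyp, hyR⟩) x
            (Finset.mem_sdiff.mpr ⟨hxq, hxR⟩)
          rcases hcomp with h | h
          · exact this.2 h
          · exact this.1 h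
      · have hxq : x ∈ q.dom := (Finset.mem_union.mp hx).resolve_left hxp
        have hyq : y ∈ q.dom := (Finset.mem_union.mp hy).resolve_left hyp
        rw [hval_q x hxq, hval_q y hyq]; exact q.spec x hxq y hyq hxy hcomp
    set rc : SpecCond T := ⟨p.dom ∪ q.dom, rval, hspec⟩ with hrc
    apply hA p (hmemA p hp) q (hmemA q hq) hpq
    refine ⟨rc, ⟨Finset.subset_union_left, fun z hz => hval_p z hz⟩,
      ⟨Finset.subset_union_right, fun z hz => hval_q z hz⟩⟩
  -- at most one condition has empty petal
  have hEss : {p | p ∈ J₂ ∧ p.dom \ R = ∅}.Subsingleton := by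
    intro p hp q hq
    by_contra hpq
    obtain ⟨u, hu, -⟩ := hlink p hp.1 q hq.1 hpq
    rw [hp.2] at hu
    exact absurd hu (Finset.notMem_empty u)
  set J₃ := J₂ \ {p | p ∈ J₂ ∧ p.dom \ R = ∅} with hJ₃def
  have hJ₃unc : ¬J₃.Countable := uncountable_diff hv hEss.countable
  -- apply the key lemma to the petals
  apply key_lemma htr hlev hch (fun p : SpecCond T => p.dom \ R) J₃ hJ₃unc
  · intro p hp q hq hpq x hxp hxq
    have hxRp := Finset.mem_sdiff.mp hxp
    have hxRq := Finset.mem_sdiff.mp hxq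
    exact hxRp.2 (hRmem p hp.1.1 q hq.1.1 hpq x hxRp.1 hxRq.1)
  · intro p hp q hq hpq
    exact hlink p hp.1 q hq.1 hpq

end
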